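/- arXiv:2006.06821 — 6 statements merged into one kernel-verified Lean document; each statement's English description precedes it below -/
import Mathlib

section
/- Let w ∈ ℝ^d be nonzero and ν ∈ ℝ^d with ⟨w, ν⟩ > 0. Then the matrix M = ‖w‖² I_d − w wᵀ + (ν νᵀ)/⟨w, ν⟩ is symmetric positive definite and satisfies M w = ν. -/
/-!
Write `M` for the matrix of the statement. Its quadratic form is
`xᵀ M x = (‖w‖² ‖x‖² - ⟪w, x⟫²) + ⟪ν, x⟫² / ⟪w, ν⟫`. Both summands are nonnegative, the first by
Cauchy–Schwarz, with equality only for `x = c • w`; for such `x ≠ 0` the second summand is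
`c² ⟪w, ν⟫ > 0`. The identity `M w = ν` is a direct computation.
-/

open Matrix

namespace Matrix

variable {n : Type*} [Fintype n]

theorem isHermitian_vecMulVec_self_real (v : n → ℝ) : (vecMulVec v v).IsHermitian := by
  simpa using (posSemidef_vecMulVec_self_star v).isHermitian

theorem sq_dotProduct_le_dotProduct_self_mul (w x : n → ℝ) :
    (w ⬝ᵥ x) ^ 2 ≤ (w ⬝ᵥ w) * (x ⬝ᵥ x) := by
  simpa only [dotProduct, sq] using Finset.sum_mul_sq_le_sq_mul_sq Finset.univ w x

theorem sq_dotProduct_lt_dotProduct_self_mul {w x : n → ℝ} (hw : w ≠ 0)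
    (hx : ∀ c : ℝ, x ≠ c • w) : (w ⬝ᵥ x) ^ 2 < (w ⬝ᵥ w) * (x ⬝ᵥ x) := by
  have hww : 0 < w ⬝ᵥ w := dotProduct_star_self_pos_iff.mpr hw
  set c := (w ⬝ᵥ x) / (w ⬝ᵥ w)
  have hgap : (w ⬝ᵥ w) * (x ⬝ᵥ x) - (w ⬝ᵥ x) ^ 2 =
      (w ⬝ᵥ w) * ((x - c • w) ⬝ᵥ (x - c • w)) := by
    simp only [sub_dotProduct, dotProduct_sub, smul_dotProduct, dotProduct_smul, smul_eq_mul,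
      dotProduct_comm x w, c]
    field_simp
    ring
  have hy : 0 < (x - c • w) ⬝ᵥ (x - c • w) :=
    dotProduct_star_self_pos_iff.mpr (sub_ne_zero.mpr (hx c))
  nlinarith [mul_pos hww hy]

variable [DecidableEq n]

/-- Named after the secant equation `M w = ν` it satisfies (`secantMatrix_mulVec_self`). -/
noncomputable def secantMatrix (w ν : n → ℝ) : Matrix n n ℝ :=
  (w ⬝ᵥ w) • (1 : Matrix n n ℝ) - vecMulVec w w + (w ⬝ᵥ ν)⁻¹ • vecMulVec ν ν

variable {w ν : n → ℝ}

theorem secantMatrix_mulVec (x : n → ℝ) :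
    secantMatrix w ν *ᵥ x = (w ⬝ᵥ w) • x - (w ⬝ᵥ x) • w + ((w ⬝ᵥ ν)⁻¹ * (ν ⬝ᵥ x)) • ν := by
  simp only [secantMatrix, add_mulVec, sub_mulVec, smul_mulVec, one_mulVec, vecMulVec_mulVec,
    op_smul_eq_smul, smul_smul]

theorem secantMatrix_mulVec_self (h : w ⬝ᵥ ν ≠ 0) : secantMatrix w ν *ᵥ w = ν := by
  rw [secantMatrix_mulVec, dotProduct_comm ν w, inv_mul_cancel₀ h, one_smul, sub_self, zero_add]

theorem dotProduct_secantMatrix_mulVec (x : n → ℝ) :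
    x ⬝ᵥ secantMatrix w ν *ᵥ x =
      ((w ⬝ᵥ w) * (x ⬝ᵥ x) - (w ⬝ᵥ x) ^ 2) + (w ⬝ᵥ ν)⁻¹ * (ν ⬝ᵥ x) ^ 2 := by
  simp only [secantMatrix_mulVec, dotProduct_add, dotProduct_sub, dotProduct_smul, smul_eq_mul,
    dotProduct_comm x w, dotProduct_comm x ν]
  ring

theorem isHermitian_secantMatrix : (secantMatrix w ν).IsHermitian :=
  ((isHermitian_one.smul (IsSelfAdjoint.all _)).sub (isHermitian_vecMulVec_self_real w)).add
    ((isHermitian_vecMulVec_self_real ν).smul (IsSelfAdjoint.all _))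

theorem posDef_secantMatrix (h : 0 < w ⬝ᵥ ν) : (secantMatrix w ν).PosDef := by
  refine posDef_iff_dotProduct_mulVec.mpr ⟨isHermitian_secantMatrix, fun x hx => ?_⟩
  rw [star_trivial, dotProduct_secantMatrix_mulVec]
  by_cases hparallel : ∃ c : ℝ, x = c • w
  · obtain ⟨c, rfl⟩ := hparallel
    have hc : c ≠ 0 := by rintro rfl; exact hx (zero_smul ℝ w)
    have hνx : ν ⬝ᵥ c • w = c * (w ⬝ᵥ ν) := by rw [dotProduct_smul, dotProduct_comm, smul_eq_mul]
    have hsecond : 0 < (w ⬝ᵥ ν)⁻¹ * (ν ⬝ᵥ c • w) ^ 2 := by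
      have := h.ne'
      rw [hνx]
      positivity
    linarith [sq_dotProduct_le_dotProduct_self_mul w (c • w)]
  · push Not at hparallel
    have hw : w ≠ 0 := by rintro rfl; simp at h
    have hfirst := sq_dotProduct_lt_dotProduct_self_mul hw hparallel
    have hsecond : 0 ≤ (w ⬝ᵥ ν)⁻¹ * (ν ⬝ᵥ x) ^ 2 := by positivity
    linarith

end Matrix

theorem stmt_4_general (d : ℕ) (w ν : Fin d → ℝ) (hpos : 0 < w ⬝ᵥ ν) :
    ((w ⬝ᵥ w) • (1 : Matrix (Fin d) (Fin d) ℝ) - vecMulVec w w +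
        (w ⬝ᵥ ν)⁻¹ • vecMulVec ν ν).PosDef ∧
    ((w ⬝ᵥ w) • (1 : Matrix (Fin d) (Fin d) ℝ) - vecMulVec w w +
        (w ⬝ᵥ ν)⁻¹ • vecMulVec ν ν) *ᵥ w = ν :=
  ⟨posDef_secantMatrix hpos, secantMatrix_mulVec_self hpos.ne'⟩

theorem stmt_4 (d : ℕ) (w ν : Fin d → ℝ) (hw : w ≠ 0) (hpos : 0 < w ⬝ᵥ ν) :
    ((w ⬝ᵥ w) • (1 : Matrix (Fin d) (Fin d) ℝ) - vecMulVec w w +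
        (w ⬝ᵥ ν)⁻¹ • vecMulVec ν ν).PosDef ∧
    ((w ⬝ᵥ w) • (1 : Matrix (Fin d) (Fin d) ℝ) - vecMulVec w w +
        (w ⬝ᵥ ν)⁻¹ • vecMulVec ν ν) *ᵥ w = ν :=
  stmt_4_general d w ν hpos
end

section
/- Let w, ν ∈ ℝ^d with w nonzero and ⟨w, ν⟩ = 1. Then the matrix M = ‖w‖² I_d − w wᵀ + ν νᵀ is symmetric positive definite, satisfies M w = ν, and moreover wᵀ M w = 1, i.e., w has unit M-norm. -/
/-!
The quadratic form of `M` is `x ↦ ((w ⬝ w)(x ⬝ x) - (w ⬝ x)²) + (ν ⬝ x)²`. The first summand is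
the Cauchy–Schwarz gap: multiplied by `w ⬝ w` it is the squared length of `(w ⬝ w) x - (w ⬝ x) w`,
so it is nonnegative and vanishes only on the line through `w`, where `(ν ⬝ x)²` is positive off `0`
because `ν ⬝ w = 1`. The identities `M w = ν` and `w ⬝ M w = w ⬝ ν = 1` are direct computations.
-/

open Matrix

namespace Matrix

section CauchySchwarz

variable {n R : Type*} [Fintype n]

lemma dotProduct_self_smul_sub_smul [CommRing R] (w x : n → R) :
    ((w ⬝ᵥ w) • x - (w ⬝ᵥ x) • w) ⬝ᵥ ((w ⬝ᵥ w) • x - (w ⬝ᵥ x) • w) =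
      (w ⬝ᵥ w) * ((w ⬝ᵥ w) * (x ⬝ᵥ x) - (w ⬝ᵥ x) ^ 2) := by
  simp only [sub_dotProduct, dotProduct_sub, smul_dotProduct, dotProduct_smul, smul_eq_mul,
    dotProduct_comm x w]
  ring

variable [CommRing R] [LinearOrder R] [IsStrictOrderedRing R]

lemma dotProduct_self_nonneg (v : n → R) : 0 ≤ v ⬝ᵥ v :=
  Finset.sum_nonneg fun i _ => mul_self_nonneg (v i)

lemma dotProduct_mul_dotProduct_sub_sq_nonneg (w x : n → R) :
    0 ≤ (w ⬝ᵥ w) * (x ⬝ᵥ x) - (w ⬝ᵥ x) ^ 2 := by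
  rcases (dotProduct_self_nonneg w).eq_or_lt with hw | hw
  · obtain rfl : w = 0 := dotProduct_self_eq_zero.mp hw.symm
    simp
  · refine nonneg_of_mul_nonneg_right ?_ hw
    rw [← dotProduct_self_smul_sub_smul]
    exact dotProduct_self_nonneg _

lemma smul_eq_smul_of_dotProduct_mul_dotProduct_eq_sq {w x : n → R}
    (h : (w ⬝ᵥ w) * (x ⬝ᵥ x) = (w ⬝ᵥ x) ^ 2) : (w ⬝ᵥ w) • x = (w ⬝ᵥ x) • w := by
  rw [← sub_eq_zero, ← dotProduct_self_eq_zero, dotProduct_self_smul_sub_smul, h, sub_self,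
    mul_zero]

end CauchySchwarz

variable {n : Type*} [Fintype n] [DecidableEq n]

def normalizingMatrix {R : Type*} [CommRing R] (w ν : n → R) : Matrix n n R :=
  (w ⬝ᵥ w) • (1 : Matrix n n R) - vecMulVec w w + vecMulVec ν ν

section CommRing

variable {R : Type*} [CommRing R]

lemma normalizingMatrix_mulVec (w ν x : n → R) :
    normalizingMatrix w ν *ᵥ x = (w ⬝ᵥ w) • x - (w ⬝ᵥ x) • w + (ν ⬝ᵥ x) • ν := by
  simp only [normalizingMatrix, add_mulVec, sub_mulVec, smul_mulVec, one_mulVec,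
    vecMulVec_mulVec, op_smul_eq_smul]

lemma normalizingMatrix_mulVec_self {w ν : n → R} (h : w ⬝ᵥ ν = 1) :
    normalizingMatrix w ν *ᵥ w = ν := by
  rw [normalizingMatrix_mulVec, sub_self, zero_add, dotProduct_comm, h, one_smul]

lemma dotProduct_normalizingMatrix_mulVec (w ν x : n → R) :
    x ⬝ᵥ (normalizingMatrix w ν *ᵥ x) =
      ((w ⬝ᵥ w) * (x ⬝ᵥ x) - (w ⬝ᵥ x) ^ 2) + (ν ⬝ᵥ x) ^ 2 := by
  simp only [normalizingMatrix_mulVec, dotProduct_add, dotProduct_sub, dotProduct_smul,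
    smul_eq_mul, dotProduct_comm x w, dotProduct_comm x ν]
  ring

end CommRing

lemma isHermitian_normalizingMatrix (w ν : n → ℝ) : (normalizingMatrix w ν).IsHermitian :=
  ((isHermitian_one.smul (IsSelfAdjoint.all _)).sub (by simp [IsHermitian])).add
    (by simp [IsHermitian])

lemma posDef_normalizingMatrix {w ν : n → ℝ} (h : w ⬝ᵥ ν = 1) :
    (normalizingMatrix w ν).PosDef := by
  refine .of_dotProduct_mulVec_pos (isHermitian_normalizingMatrix w ν) fun x hx => ?_
  rw [star_trivial, dotProduct_normalizingMatrix_mulVec]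
  by_contra! hle
  have hgap_nonneg := dotProduct_mul_dotProduct_sub_sq_nonneg w x
  have hνx : ν ⬝ᵥ x = 0 := pow_eq_zero_iff two_ne_zero |>.mp (by linarith [sq_nonneg (ν ⬝ᵥ x)])
  have hline : (w ⬝ᵥ w) • x = (w ⬝ᵥ x) • w :=
    smul_eq_smul_of_dotProduct_mul_dotProduct_eq_sq (by linarith [sq_nonneg (ν ⬝ᵥ x)])
  have hwx : w ⬝ᵥ x = 0 := by
    simpa [dotProduct_smul, hνx, dotProduct_comm ν w, h, eq_comm] using congrArg (ν ⬝ᵥ ·) hline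
  rw [hwx, zero_smul, smul_eq_zero, dotProduct_self_eq_zero] at hline
  rcases hline with rfl | rfl
  · simp at h
  · exact hx rfl

end Matrix

theorem stmt_5_general (d : ℕ) (w ν : Fin d → ℝ) (hone : w ⬝ᵥ ν = 1) :
    ((w ⬝ᵥ w) • (1 : Matrix (Fin d) (Fin d) ℝ) - vecMulVec w w + vecMulVec ν ν).PosDef ∧
    ((w ⬝ᵥ w) • (1 : Matrix (Fin d) (Fin d) ℝ) - vecMulVec w w + vecMulVec ν ν) *ᵥ w = ν ∧
    w ⬝ᵥ (((w ⬝ᵥ w) • (1 : Matrix (Fin d) (Fin d) ℝ) - vecMulVec w w + vecMulVec ν ν) *ᵥ w)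
      = 1 := by
  have hMw : normalizingMatrix w ν *ᵥ w = ν := normalizingMatrix_mulVec_self hone
  refine ⟨posDef_normalizingMatrix hone, hMw, ?_⟩
  change w ⬝ᵥ (normalizingMatrix w ν *ᵥ w) = 1
  rw [hMw, hone]

theorem stmt_5 (d : ℕ) (w ν : Fin d → ℝ) (hw : w ≠ 0) (hone : w ⬝ᵥ ν = 1) :
    ((w ⬝ᵥ w) • (1 : Matrix (Fin d) (Fin d) ℝ) - vecMulVec w w + vecMulVec ν ν).PosDef ∧
    ((w ⬝ᵥ w) • (1 : Matrix (Fin d) (Fin d) ℝ) - vecMulVec w w + vecMulVec ν ν) *ᵥ w = ν ∧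
    w ⬝ᵥ (((w ⬝ᵥ w) • (1 : Matrix (Fin d) (Fin d) ℝ) - vecMulVec w w + vecMulVec ν ν) *ᵥ w)
      = 1 :=
  stmt_5_general d w ν hone
end

section
/- Let P be symmetric positive definite, X ∈ ℝ^{n×d} with X P Xᵀ invertible, and y ∈ ℝⁿ. For step size η with 0 < η < 1/λ_max(X P Xᵀ) and initialization w₀, the iterates w_{k+1} = w_k − η P Xᵀ (X w_k − y) satisfy w_k = w₀ + P Xᵀ K⁻¹ [I − (I − η K)^k](y − X w₀) where K = X P Xᵀ, and converge as k → ∞ to w₀ + P Xᵀ (X P Xᵀ)⁻¹ (y − X w₀). -/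
/-!
The residual `X w_k - y` is multiplied by `1 - η K` at every step, `K = X P Xᵀ`, so `w_k - w₀` is
`-η P Xᵀ` applied to a geometric sum in `1 - η K`; since `η K` is invertible that sum is
`K⁻¹ (1 - (1 - η K)^k)`. Diagonalizing the symmetric matrix `K` orthogonally, the eigenvalues
`1 - η μ` of `1 - η K` lie in `(-1, 1)`, hence `(1 - η K)^k → 0`.
-/

open Matrix Filter Topology Finset

theorem spectrum_one_sub_smul {𝕜 A : Type*} [Field 𝕜] [Ring A] [Algebra 𝕜 A] (a : A) {η : 𝕜}
    (hη : η ≠ 0) : spectrum 𝕜 (1 - η • a) = (fun μ => 1 - η * μ) '' spectrum 𝕜 a := by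
  rw [← map_one (algebraMap 𝕜 A), ← spectrum.singleton_sub_eq, ← Units.val_mk0 hη,
    ← Units.smul_def, spectrum.unit_smul_eq_smul, Set.singleton_sub, ← Set.image_smul,
    Set.image_image]
  rfl

theorem Matrix.smul_geom_sum_one_sub_smul {n R : Type*} [Fintype n] [DecidableEq n] [CommRing R]
    {K : Matrix n n R} (hK : IsUnit K.det) (η : R) (k : ℕ) :
    η • ∑ j ∈ range k, (1 - η • K) ^ j = K⁻¹ * (1 - (1 - η • K) ^ k) := by
  rw [← mul_neg_geom_sum, sub_sub_cancel, smul_mul_assoc, mul_smul_comm,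
    nonsing_inv_mul_cancel_left K _ hK]

namespace Matrix.IsHermitian

variable {n 𝕜 : Type*} [Fintype n] [DecidableEq n] [RCLike 𝕜] {A : Matrix n n 𝕜}

theorem tendsto_pow_atTop_nhds_zero (hA : A.IsHermitian) (h : ∀ μ ∈ spectrum ℝ A, |μ| < 1) :
    Tendsto (A ^ ·) atTop (𝓝 0) := by
  set U : Matrix n n 𝕜 := (hA.eigenvectorUnitary : Matrix n n 𝕜)
  have hpow (k : ℕ) : A ^ k = U * diagonal (fun i => (hA.eigenvalues i : 𝕜) ^ k) * star U := by
    conv_lhs => rw [hA.spectral_theorem]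
    rw [← map_pow, diagonal_pow, Unitary.conjStarAlgAut_apply]
    rfl
  have hdiag : Tendsto (fun k => diagonal (fun i => (hA.eigenvalues i : 𝕜) ^ k)) atTop
      (𝓝 (diagonal 0)) :=
    (continuous_id.matrix_diagonal.tendsto _).comp <| tendsto_pi_nhds.mpr fun i =>
      tendsto_pow_atTop_nhds_zero_of_norm_lt_one <| by
        simpa using h _ (hA.eigenvalues_mem_spectrum_real i)
  simpa [hpow] using (hdiag.const_mul U).mul_const (star U)

theorem tendsto_pow_one_sub_smul_atTop_nhds_zero (hA : A.IsHermitian) {η : ℝ} (hη : 0 < η)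
    (h : ∀ μ ∈ spectrum ℝ A, 0 < μ ∧ η * μ < 2) :
    Tendsto ((1 - η • A) ^ ·) atTop (𝓝 0) := by
  refine (isHermitian_one.sub (hA.smul (IsSelfAdjoint.all η))).tendsto_pow_atTop_nhds_zero ?_
  rw [spectrum_one_sub_smul _ hη.ne']
  rintro _ ⟨μ, hμ, rfl⟩
  obtain ⟨hμ_pos, hμ_lt⟩ := h μ hμ
  rw [abs_lt]
  constructor <;> nlinarith

end Matrix.IsHermitian

namespace PreconditionedGD

variable {R m n : Type*} [CommRing R] [Fintype m] [Fintype n] [DecidableEq m]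
  {A : Matrix n m R} {X : Matrix m n R} {y : m → R} {η : R} {w : ℕ → n → R}

theorem residual_eq_pow_mulVec (hrec : ∀ k, w (k + 1) = w k - η • (A *ᵥ (X *ᵥ w k - y)))
    (k : ℕ) : X *ᵥ w k - y = (1 - η • (X * A)) ^ k *ᵥ (X *ᵥ w 0 - y) := by
  induction k with
  | zero => simp
  | succ k ih =>
    rw [hrec, pow_succ', ← mulVec_mulVec, ← ih, sub_mulVec, one_mulVec, smul_mulVec,
      ← mulVec_mulVec, mulVec_sub, mulVec_smul]
    abel

theorem iterate_eq_sub_geom_sum (hrec : ∀ k, w (k + 1) = w k - η • (A *ᵥ (X *ᵥ w k - y)))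
    (k : ℕ) :
    w k = w 0 - A *ᵥ ((η • ∑ j ∈ range k, (1 - η • (X * A)) ^ j) *ᵥ (X *ᵥ w 0 - y)) := by
  induction k with
  | zero => simp
  | succ k ih =>
    rw [hrec, residual_eq_pow_mulVec hrec k, ih, sum_range_succ, smul_add, add_mulVec, mulVec_add]
    simp only [smul_mulVec, mulVec_smul]
    abel

theorem iterate_eq (hrec : ∀ k, w (k + 1) = w k - η • (A *ᵥ (X *ᵥ w k - y)))
    (hK : IsUnit (X * A).det) (k : ℕ) :
    w k = w 0 + A *ᵥ ((X * A)⁻¹ *ᵥ ((1 - (1 - η • (X * A)) ^ k) *ᵥ (y - X *ᵥ w 0))) := by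
  rw [iterate_eq_sub_geom_sum hrec, smul_geom_sum_one_sub_smul hK, ← mulVec_mulVec, ← neg_sub y,
    mulVec_neg, mulVec_neg, mulVec_neg, sub_neg_eq_add]

theorem tendsto_of_tendsto_pow [TopologicalSpace R] [IsTopologicalRing R]
    (hrec : ∀ k, w (k + 1) = w k - η • (A *ᵥ (X *ᵥ w k - y))) (hK : IsUnit (X * A).det)
    (hpow : Tendsto ((1 - η • (X * A)) ^ ·) atTop (𝓝 0)) :
    Tendsto w atTop (𝓝 (w 0 + A *ᵥ ((X * A)⁻¹ *ᵥ (y - X *ᵥ w 0)))) := by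
  have hcont : Continuous fun M : Matrix m m R =>
      w 0 + A *ᵥ ((X * A)⁻¹ *ᵥ ((1 - M) *ᵥ (y - X *ᵥ w 0))) := by
    fun_prop
  simpa using ((hcont.tendsto 0).comp hpow).congr fun k => (iterate_eq hrec hK k).symm

end PreconditionedGD

theorem stmt_8 (n d : ℕ)
    (P : Matrix (Fin d) (Fin d) ℝ) (hP : P.PosDef)
    (X : Matrix (Fin n) (Fin d) ℝ) (y : Fin n → ℝ)
    (hinv : Invertible (X * P * Xᵀ))
    (η : ℝ) (hη : 0 < η)
    (hspec : ∀ μ ∈ spectrum ℝ (X * P * Xᵀ), 0 < μ ∧ η * μ < 1)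
    (w₀ : Fin d → ℝ) (w : ℕ → Fin d → ℝ)
    (hw0 : w 0 = w₀)
    (hrec : ∀ k, w (k + 1) = w k - η • (P *ᵥ (Xᵀ *ᵥ (X *ᵥ w k - y)))) :
    (∀ k, w k = w₀ + P *ᵥ (Xᵀ *ᵥ ((X * P * Xᵀ)⁻¹ *ᵥ
        ((1 - (1 - η • (X * P * Xᵀ)) ^ k) *ᵥ (y - X *ᵥ w₀))))) ∧
    Tendsto w atTop
      (nhds (w₀ + P *ᵥ (Xᵀ *ᵥ ((X * P * Xᵀ)⁻¹ *ᵥ (y - X *ᵥ w₀))))) := by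
  have hassoc : X * (P * Xᵀ) = X * P * Xᵀ := (Matrix.mul_assoc ..).symm
  have hrec' : ∀ k, w (k + 1) = w k - η • ((P * Xᵀ) *ᵥ (X *ᵥ w k - y)) := by
    simpa only [← mulVec_mulVec] using hrec
  have hunit : IsUnit (X * (P * Xᵀ)).det := hassoc ▸ isUnit_det_of_invertible _
  have hherm : (X * P * Xᵀ).IsHermitian := by
    simpa only [conjTranspose_eq_transpose_of_trivial] using
      isHermitian_mul_mul_conjTranspose X hP.isHermitian
  have hpow := hherm.tendsto_pow_one_sub_smul_atTop_nhds_zero hη fun μ hμ =>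
    ⟨(hspec μ hμ).1, by linarith [(hspec μ hμ).2]⟩
  constructor
  · intro k
    rw [mulVec_mulVec, ← hw0, ← hassoc]
    exact PreconditionedGD.iterate_eq hrec' hunit k
  · rw [mulVec_mulVec, ← hw0, ← hassoc]
    exact PreconditionedGD.tendsto_of_tendsto_pow hrec' hunit (hassoc ▸ hpow)
end

section
/- Let g ∈ ℝ^d lie in the range of Xᵀ for X ∈ ℝ^{n×d}, and let ε > 0. Then (g gᵀ + ε I_d)^{-1/2} g lies in the range of Xᵀ. -/
/-!
`g` is an eigenvector of `vecMulVec g g + ε • 1` with eigenvalue `g ⬝ᵥ g + ε > 0`, hence of its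
inverse, and hence of the square root of the inverse, which therefore maps `g` to a multiple of `g`.
-/

open Matrix

/-- The square root of a positive semidefinite matrix, as defined in Mathlib of December 2024
(`Matrix.PosSemidef.sqrt`, since removed). -/
noncomputable def Matrix.PosSemidef.sqrt {n : Type*} [Fintype n] [DecidableEq n]
    {A : Matrix n n ℝ} (hA : A.PosSemidef) : Matrix n n ℝ :=
  hA.1.eigenvectorUnitary.1 * diagonal ((↑) ∘ (√·) ∘ hA.1.eigenvalues) *
  (star hA.1.eigenvectorUnitary : Matrix n n ℝ)

namespace Matrix

section Field

variable {K m : Type*} [Field K] [Fintype m] [DecidableEq m]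

lemma inv_mulVec_eq_inv_smul_of_mulVec_eq_smul {A : Matrix m m K} (hA : IsUnit A) {v : m → K}
    {c : K} (hc : c ≠ 0) (h : A *ᵥ v = c • v) : A⁻¹ *ᵥ v = c⁻¹ • v := by
  have := hA.invertible
  refine inv_mulVec_eq_vec ?_
  rw [mulVec_smul, h, smul_smul, inv_mul_cancel₀ hc, one_smul]

end Field

variable {m : Type*} [Fintype m] [DecidableEq m]

lemma vecMulVec_self_add_smul_one_mulVec (g : m → ℝ) (ε : ℝ) :
    (vecMulVec g g + ε • (1 : Matrix m m ℝ)) *ᵥ g = (g ⬝ᵥ g + ε) • g := by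
  rw [add_mulVec, vecMulVec_mulVec, smul_mulVec, one_mulVec, add_smul, op_smul_eq_smul]

lemma posDef_vecMulVec_self_add_smul_one (g : m → ℝ) {ε : ℝ} (hε : 0 < ε) :
    (vecMulVec g g + ε • (1 : Matrix m m ℝ)).PosDef := by
  refine PosDef.posSemidef_add ?_ (PosDef.one.smul hε)
  simpa using posSemidef_vecMulVec_self_star g

namespace PosSemidef

variable {B : Matrix m m ℝ}

lemma sqrt_mul_self (hB : B.PosSemidef) : hB.sqrt * hB.sqrt = B := by
  set U : Matrix m m ℝ := hB.1.eigenvectorUnitary.1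
  have hU : star U * U = 1 := Unitary.star_mul_self_of_mem hB.1.eigenvectorUnitary.2
  conv_rhs => rw [hB.1.spectral_theorem, Unitary.conjStarAlgAut_apply]
  calc hB.sqrt * hB.sqrt
      = U * diagonal ((↑) ∘ (√·) ∘ hB.1.eigenvalues) * (star U * U) *
          diagonal ((↑) ∘ (√·) ∘ hB.1.eigenvalues) * star U := by
        simp only [PosSemidef.sqrt, U, Matrix.mul_assoc]
    _ = _ := by
        rw [hU, Matrix.mul_one, Matrix.mul_assoc U, diagonal_mul_diagonal]
        congr 3
        funext i
        simp [Real.mul_self_sqrt (hB.eigenvalues_nonneg i)]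

lemma posSemidef_sqrt (hB : B.PosSemidef) : hB.sqrt.PosSemidef := by
  have hD : (diagonal ((↑) ∘ (√·) ∘ hB.1.eigenvalues) : Matrix m m ℝ).PosSemidef :=
    posSemidef_diagonal_iff.mpr fun i => Real.sqrt_nonneg _
  simpa [PosSemidef.sqrt, star_eq_conjTranspose] using
    hD.mul_mul_conjTranspose_same hB.1.eigenvectorUnitary.1

/-- Since `S + √μ • 1` is invertible, `(S + √μ • 1) (S - √μ • 1) v = (S * S - μ • 1) v = 0`
forces `S v = √μ • v`. -/
lemma mulVec_eq_sqrt_smul_of_mul_self_mulVec {S : Matrix m m ℝ} (hS : S.PosSemidef)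
    {v : m → ℝ} {μ : ℝ} (hμ : 0 < μ) (h : (S * S) *ᵥ v = μ • v) : S *ᵥ v = √μ • v := by
  have hunit : IsUnit (S + √μ • 1) :=
    (PosDef.posSemidef_add hS (PosDef.one.smul (Real.sqrt_pos.2 hμ))).isUnit
  have hzero : (S + √μ • 1) *ᵥ (S *ᵥ v - √μ • v) = 0 := by
    rw [add_mulVec, mulVec_sub, mulVec_sub, mulVec_mulVec, h, smul_mulVec, one_mulVec, mulVec_smul,
      smul_mulVec, one_mulVec, smul_smul, Real.mul_self_sqrt hμ.le]
    abel
  rw [← sub_eq_zero]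
  exact (mulVec_injective_iff_isUnit.2 hunit) (hzero.trans (mulVec_zero _).symm)

lemma sqrt_mulVec_eq_sqrt_smul (hB : B.PosSemidef) {v : m → ℝ} {μ : ℝ} (hμ : 0 < μ)
    (h : B *ᵥ v = μ • v) : hB.sqrt *ᵥ v = √μ • v :=
  hB.posSemidef_sqrt.mulVec_eq_sqrt_smul_of_mul_self_mulVec hμ (by rwa [hB.sqrt_mul_self])

end PosSemidef

end Matrix

theorem stmt_10 (n d : ℕ)
    (X : Matrix (Fin n) (Fin d) ℝ) (g : Fin d → ℝ)
    (α : Fin n → ℝ) (hg : g = Xᵀ *ᵥ α)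
    (ε : ℝ) (hε : 0 < ε)
    (hA : ((vecMulVec g g + ε • (1 : Matrix (Fin d) (Fin d) ℝ))⁻¹).PosSemidef) :
    ∃ β : Fin n → ℝ, hA.sqrt *ᵥ g = Xᵀ *ᵥ β := by
  have hc : 0 < g ⬝ᵥ g + ε := add_pos_of_nonneg_of_pos (dotProduct_self_star_nonneg g) hε
  have hinv : (vecMulVec g g + ε • 1)⁻¹ *ᵥ g = (g ⬝ᵥ g + ε)⁻¹ • g :=
    inv_mulVec_eq_inv_smul_of_mulVec_eq_smul (posDef_vecMulVec_self_add_smul_one g hε).isUnit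
      hc.ne' (vecMulVec_self_add_smul_one_mulVec g ε)
  refine ⟨√(g ⬝ᵥ g + ε)⁻¹ • α, ?_⟩
  rw [hA.sqrt_mulVec_eq_sqrt_smul (inv_pos.2 hc) hinv, mulVec_smul, ← hg]
end

section
/- Suppose data points x₁,…,x_v ∈ ℝ^d can be shattered by linear classifiers w with ½ wᵀ P⁻¹ w ≤ E at margin 1 (for every sign pattern (y₁,…,y_v) there is such a w with yⱼ⟨w, xⱼ⟩ ≥ 1 for all j). Then v ≤ √(2E) · √(Σⱼ xⱼᵀ P xⱼ). -/
/-!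
Averaging over sign vectors. For a sign vector `s`, the shattering hypothesis gives `w` with
`v ≤ ∑ⱼ sⱼ ⟪w, xⱼ⟫ = ⟪w, zₛ⟫`, where `zₛ = ∑ⱼ sⱼ xⱼ`, and Cauchy–Schwarz in the `P`-inner product
bounds `⟪w, zₛ⟫² ≤ (wᵀ P⁻¹ w) (zₛᵀ P zₛ) ≤ 2E · zₛᵀ P zₛ`. Since `∑ₛ sⱼ sₖ = 0` for `j ≠ k`, the mean
of `zₛᵀ P zₛ` over all `2ᵛ` sign vectors is `∑ⱼ xⱼᵀ P xⱼ`, so `v² ≤ 2E ∑ⱼ xⱼᵀ P xⱼ`.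
-/

open Matrix Finset

theorem Int.sum_units_mul_units_eq_ite {ι : Type*} [Fintype ι] [DecidableEq ι] (i j : ι) :
    ∑ s : ι → ℤˣ, ((s i : ℤ) * s j) = if i = j then 2 ^ Fintype.card ι else 0 := by
  split_ifs with hij
  · subst hij
    simp [Fintype.card_units_int]
  · -- multiplying `s` by the sign flip at `i` permutes the sign vectors and negates each summand
    have hflip := Equiv.sum_comp (Equiv.mulLeft (Pi.mulSingle i (-1) : ι → ℤˣ))
      (fun s : ι → ℤˣ => ((s i : ℤ) * s j))
    simp only [Equiv.coe_mulLeft, Pi.mul_apply, Pi.mulSingle_eq_same, Pi.mulSingle_eq_of_ne' hij,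
      Units.val_neg, neg_mul, one_mul, sum_neg_distrib] at hflip
    linarith

theorem LinearMap.sum_units_apply_sum_smul {ι R M N : Type*} [Fintype ι] [DecidableEq ι]
    [CommRing R] [AddCommGroup M] [Module R M] [AddCommGroup N] [Module R N]
    (B : M →ₗ[R] M →ₗ[R] N) (x : ι → M) :
    ∑ s : ι → ℤˣ, B (∑ j, s j • x j) (∑ j, s j • x j) =
      2 ^ Fintype.card ι • ∑ j, B (x j) (x j) := by
  calc ∑ s : ι → ℤˣ, B (∑ j, s j • x j) (∑ j, s j • x j)
      = ∑ s : ι → ℤˣ, ∑ j, ∑ k, ((s k : ℤ) * s j) • B (x j) (x k) := by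
        simp only [map_sum, LinearMap.sum_apply, Units.smul_def, map_zsmul, LinearMap.smul_apply,
          smul_sum, smul_smul]
        exact sum_congr rfl fun s _ => sum_comm
    _ = ∑ j, ∑ k, (∑ s : ι → ℤˣ, ((s k : ℤ) * s j)) • B (x j) (x k) := by
        simp only [sum_smul]
        rw [sum_comm]
        exact sum_congr rfl fun j _ => sum_comm
    _ = 2 ^ Fintype.card ι • ∑ j, B (x j) (x j) := by
        simp only [Int.sum_units_mul_units_eq_ite, ite_smul, zero_smul, sum_ite_eq', mem_univ,
          if_true, ← smul_sum]
        exact_mod_cast natCast_zsmul (∑ j, B (x j) (x j)) (2 ^ Fintype.card ι)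

theorem Matrix.PosDef.sq_dotProduct_le {n : Type*} [Fintype n] [DecidableEq n]
    {P : Matrix n n ℝ} (hP : P.PosDef) (w z : n → ℝ) :
    (w ⬝ᵥ z) ^ 2 ≤ (w ⬝ᵥ P⁻¹ *ᵥ w) * (z ⬝ᵥ P *ᵥ z) := by
  have hPt : Pᵀ = P := by
    rw [← conjTranspose_eq_transpose_of_trivial]
    exact hP.isHermitian
  have hPPinv : P *ᵥ (P⁻¹ *ᵥ w) = w := by
    rw [mulVec_mulVec, mul_nonsing_inv P hP.det_pos.ne'.isUnit, one_mulVec]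
  have hcs := LinearMap.BilinForm.apply_mul_apply_le_of_forall_zero_le (P.toLinearMap₂' ℝ)
    (fun y => by simpa [toLinearMap₂'_apply'] using hP.posSemidef.dotProduct_mulVec_nonneg y)
    (P⁻¹ *ᵥ w) z
  have hleft : P⁻¹ *ᵥ w ⬝ᵥ (P *ᵥ z) = w ⬝ᵥ z := by
    rw [dotProduct_mulVec, ← mulVec_transpose, hPt, hPPinv]
  simp only [toLinearMap₂'_apply', hleft, hPPinv] at hcs
  rwa [dotProduct_comm z w, dotProduct_comm (P⁻¹ *ᵥ w) w, ← sq] at hcs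

theorem Matrix.PosDef.sq_card_le_of_margin {ι n : Type*} [Fintype ι] [Fintype n] [DecidableEq n]
    {P : Matrix n n ℝ} (hP : P.PosDef) (x : ι → n → ℝ) (s : ι → ℤˣ) (w : n → ℝ)
    (hmargin : ∀ j, 1 ≤ ((s j : ℤ) : ℝ) * (w ⬝ᵥ x j)) :
    (Fintype.card ι : ℝ) ^ 2 ≤
      (w ⬝ᵥ P⁻¹ *ᵥ w) * ((∑ j, s j • x j) ⬝ᵥ P *ᵥ ∑ j, s j • x j) := by
  have hcard : (Fintype.card ι : ℝ) ≤ w ⬝ᵥ ∑ j, s j • x j :=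
    calc (Fintype.card ι : ℝ) = ∑ _j : ι, 1 := by simp
      _ ≤ ∑ j, ((s j : ℤ) : ℝ) * (w ⬝ᵥ x j) := sum_le_sum fun j _ => hmargin j
      _ = w ⬝ᵥ ∑ j, s j • x j := by
        simp only [dotProduct_sum, Units.smul_def, ← Int.cast_smul_eq_zsmul ℝ, dotProduct_smul,
          smul_eq_mul]
  calc (Fintype.card ι : ℝ) ^ 2 ≤ (w ⬝ᵥ ∑ j, s j • x j) ^ 2 := by gcongr
    _ ≤ _ := hP.sq_dotProduct_le w _

theorem stmt_17_general (v d : ℕ) (x : Fin v → Fin d → ℝ)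
    (P : Matrix (Fin d) (Fin d) ℝ) (hP : P.PosDef) (E : ℝ)
    (hshatter : ∀ y : Fin v → ℝ, (∀ j, y j = 1 ∨ y j = -1) →
      ∃ w : Fin d → ℝ, (1 / 2) * (w ⬝ᵥ (P⁻¹ *ᵥ w)) ≤ E ∧
        ∀ j, 1 ≤ y j * (w ⬝ᵥ x j)) :
    (v : ℝ) ≤ Real.sqrt (2 * E) * Real.sqrt (∑ j, x j ⬝ᵥ (P *ᵥ x j)) := by
  have hq (z : Fin d → ℝ) : 0 ≤ z ⬝ᵥ (P *ᵥ z) := by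
    simpa using hP.posSemidef.dotProduct_mulVec_nonneg z
  set z : (Fin v → ℤˣ) → Fin d → ℝ := fun s => ∑ j, s j • x j
  have hsign (s : Fin v → ℤˣ) : (v : ℝ) ^ 2 ≤ 2 * E * (z s ⬝ᵥ (P *ᵥ z s)) := by
    obtain ⟨w, hwE, hmargin⟩ := hshatter (fun j => (s j : ℤ))
      (fun j => by rcases Int.units_eq_one_or (s j) with h | h <;> simp [h])
    calc (v : ℝ) ^ 2 ≤ (w ⬝ᵥ P⁻¹ *ᵥ w) * (z s ⬝ᵥ (P *ᵥ z s)) := by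
          simpa using hP.sq_card_le_of_margin x s w hmargin
      _ ≤ 2 * E * (z s ⬝ᵥ (P *ᵥ z s)) := mul_le_mul_of_nonneg_right (by linarith) (hq _)
  have hmean : ∑ s, z s ⬝ᵥ (P *ᵥ z s) = 2 ^ v * ∑ j, x j ⬝ᵥ (P *ᵥ x j) := by
    simpa only [toLinearMap₂'_apply', nsmul_eq_mul, Nat.cast_pow, Nat.cast_ofNat,
      Fintype.card_fin] using (P.toLinearMap₂' ℝ).sum_units_apply_sum_smul x
  have hv : (v : ℝ) ^ 2 ≤ 2 * E * ∑ j, x j ⬝ᵥ (P *ᵥ x j) := by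
    have h := sum_le_sum fun s (_ : s ∈ univ) => hsign s
    rw [← mul_sum, hmean, sum_const, card_univ, Fintype.card_fun, Fintype.card_units_int,
      Fintype.card_fin, nsmul_eq_mul, mul_left_comm] at h
    push_cast at h
    exact le_of_mul_le_mul_left h (by positivity)
  rw [← Real.sqrt_mul' _ (sum_nonneg fun j _ => hq (x j))]
  exact Real.le_sqrt_of_sq_le hv

theorem stmt_17 (v d : ℕ) (x : Fin v → Fin d → ℝ)
    (P : Matrix (Fin d) (Fin d) ℝ) (hP : P.PosDef) (E : ℝ) (hE : 0 < E)
    (hshatter : ∀ y : Fin v → ℝ, (∀ j, y j = 1 ∨ y j = -1) →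
      ∃ w : Fin d → ℝ, (1 / 2) * (w ⬝ᵥ (P⁻¹ *ᵥ w)) ≤ E ∧
        ∀ j, 1 ≤ y j * (w ⬝ᵥ x j)) :
    (v : ℝ) ≤ Real.sqrt (2 * E) * Real.sqrt (∑ j, x j ⬝ᵥ (P *ᵥ x j)) :=
  stmt_17_general v d x P hP E hshatter
end

section
/- Consider the two-point dataset x₁ = (−1, 0) with label y₁ = −1 and x₂ = (a, √(1−a²)) with label y₂ = 1, where 0 < a < 1. The vector w* = (1, √(1−a²)/(1+a)) satisfies y₁⟨w*, x₁⟩ = y₂⟨w*, x₂⟩ = 1 and is the minimum-norm vector among all w with yᵢ⟨w, xᵢ⟩ ≥ 1 for i = 1, 2. -/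
open Matrix

theorem stmt_19 (a : ℝ) (ha : 0 < a) (ha1 : a < 1) :
    (-1 : ℝ) * (![1, Real.sqrt (1 - a ^ 2) / (1 + a)] ⬝ᵥ ![(-1 : ℝ), 0]) = 1 ∧
    (1 : ℝ) * (![1, Real.sqrt (1 - a ^ 2) / (1 + a)] ⬝ᵥ ![a, Real.sqrt (1 - a ^ 2)]) = 1 ∧
    ∀ w : Fin 2 → ℝ,
      1 ≤ (-1 : ℝ) * (w ⬝ᵥ ![(-1 : ℝ), 0]) →
      1 ≤ (1 : ℝ) * (w ⬝ᵥ ![a, Real.sqrt (1 - a ^ 2)]) →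
      Real.sqrt (![1, Real.sqrt (1 - a ^ 2) / (1 + a)] ⬝ᵥ
          ![1, Real.sqrt (1 - a ^ 2) / (1 + a)]) ≤ Real.sqrt (w ⬝ᵥ w) := by
  have hpa : (0:ℝ) < 1 + a := by linarith
  have h1a : (0:ℝ) ≤ 1 - a ^ 2 := by nlinarith
  set s := Real.sqrt (1 - a ^ 2) with hs
  have hs2 : s ^ 2 = 1 - a ^ 2 := Real.sq_sqrt h1a
  have hsnn : 0 ≤ s := Real.sqrt_nonneg _
  refine ⟨?_, ?_, ?_⟩
  · simp [dotProduct, Fin.sum_univ_two]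
  · simp only [dotProduct, Fin.sum_univ_two, Matrix.cons_val_zero, Matrix.cons_val_one,
      Matrix.head_cons, one_mul]
    field_simp
    nlinarith [hs2]
  · intro w h1 h2
    apply Real.sqrt_le_sqrt
    simp only [dotProduct, Fin.sum_univ_two, Matrix.cons_val_zero, Matrix.cons_val_one,
      Matrix.head_cons, one_mul] at h1 h2 ⊢
    have hw0 : 1 ≤ w 0 := by linarith [h1]
    have hw2 : 1 ≤ w 0 * a + w 1 * s := by linarith [h2]
    have hkey : (1:ℝ) + s / (1 + a) * (s / (1 + a)) = 2 / (1 + a) := by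
      field_simp
      nlinarith [hs2]
    rw [hkey]
    rw [div_le_iff₀ hpa]
    nlinarith [sq_nonneg ((1 + a) * w 1 - s), sq_nonneg (w 0 - 1), mul_pos hpa hpa,
      mul_le_mul_of_nonneg_left hw2 (le_of_lt hpa)]
end
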